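/- ∈*-Union conclusion: for all x, u, if x is a set and the E-elements of u are exactly the objects that are E-elements of some E-element of x that is a set (i.e., ∀ y, E y u ↔ ∃ z, E z x ∧ set(z) ∧ E y z), then u is a set and ∀ y, y ∈* u ↔ ∃ z, z ∈* x ∧ y ∈* z. -/

import Mathlib

/-- Coextensionality: `x =* y` iff `x` and `y` have the same `E`-elements. -/
def coext {α : Type*} (E : α → α → Prop) (x y : α) : Prop :=
  ∀ z, E z x ↔ E z y

/-- `set(y)`: membership in `y` respects coextensionality. -/
def isSet {α : Type*} (E : α → α → Prop) (y : α) : Prop :=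
  ∀ m n, coext E m n → (E m y ↔ E n y)

/-- `x ∈* y` iff `y` is a set and `E x y`. -/
def memStar {α : Type*} (E : α → α → Prop) (x y : α) : Prop :=
  isSet E y ∧ E x y

section

variable {α : Type*} {E : α → α → Prop}

theorem memStar_iff_of_isSet {x y : α} (hy : isSet E y) : memStar E x y ↔ E x y :=
  and_iff_right hy

theorem isSet_of_mem_iff_exists_set {P : α → Prop} {u : α}
    (hu : ∀ y, E y u ↔ ∃ z, P z ∧ isSet E z ∧ E y z) : isSet E u := by
  intro m n hmn
  rw [hu m, hu n]
  exact exists_congr fun z => and_congr_right fun _ => and_congr_right fun hz => hz m n hmn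

end

/-- `∈*`-Union conclusion: if `x` is a set and the `E`-elements of `u` are
exactly the `E`-elements of the set-elements of `x`, then `u` is a set and is
an `∈*`-union of `x`. -/
theorem union_star {α : Type*} (E : α → α → Prop) :
    ∀ x u, isSet E x →
      (∀ y, E y u ↔ ∃ z, E z x ∧ isSet E z ∧ E y z) →
      isSet E u ∧ (∀ y, memStar E y u ↔ ∃ z, memStar E z x ∧ memStar E y z) := by
  intro x u hx hu
  have hsu : isSet E u := isSet_of_mem_iff_exists_set hu
  refine ⟨hsu, fun y => ?_⟩
  rw [memStar_iff_of_isSet hsu, hu y]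
  simp only [memStar, hx, true_and]
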